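/- The cross term between estimation error and proxy-score noise vanishes: for every measurable ŝ : ℝ^D → ℝ^D such that all integrals below are finite, (1/M) Σ_{m=1}^M ∫_{ℝ^D} ( ŝ(x) − s(x) ) · ( s(x) − s̃(x; μ_m) ) N(x; α μ_m, S) dx = 0. -/

import Mathlib

open Matrix MeasureTheory BigOperators

/-- Partial derivative of a scalar function on `ℝ^D` in coordinate `i`. -/
noncomputable def pderiv' {D : ℕ} (i : Fin D) (f : (Fin D → ℝ) → ℝ) (x : Fin D → ℝ) : ℝ :=
  deriv (fun t => f (Function.update x i t)) (x i)

/-- Multivariate Gaussian density `N(x; m, S)`. -/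
noncomputable def gaussDensity {D : ℕ} (S : Matrix (Fin D) (Fin D) ℝ) (m x : Fin D → ℝ) : ℝ :=
  ((2 * Real.pi) ^ D * S.det) ^ (-(1/2) : ℝ) *
    Real.exp (-((x - m) ⬝ᵥ S⁻¹.mulVec (x - m)) / 2)

/-- Noise-corrupted marginal `p(x) = (1/M) ∑ₘ N(x; α μₘ, S)`. -/
noncomputable def marginal {D M : ℕ} (μ : Fin M → Fin D → ℝ) (α : ℝ)
    (S : Matrix (Fin D) (Fin D) ℝ) (x : Fin D → ℝ) : ℝ :=
  (M : ℝ)⁻¹ * ∑ m, gaussDensity S (α • μ m) x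

/-- The score `s(x) = ∇ₓ log p(x)`. -/
noncomputable def score {D M : ℕ} (μ : Fin M → Fin D → ℝ) (α : ℝ)
    (S : Matrix (Fin D) (Fin D) ℝ) (x : Fin D → ℝ) : Fin D → ℝ :=
  fun i => pderiv' i (fun y => Real.log (marginal μ α S y)) x

/-- The proxy score `s̃(x; x₀) = S⁻¹ (α x₀ − x)`. -/
noncomputable def proxyScore {D : ℕ} (α : ℝ) (S : Matrix (Fin D) (Fin D) ℝ)
    (x x₀ : Fin D → ℝ) : Fin D → ℝ :=
  S⁻¹.mulVec (α • x₀ - x)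

/-- Posterior weights `wₘ(x) = N(x; α μₘ, S) / ∑ₘ' N(x; α μₘ', S)`. -/
noncomputable def postW {D M : ℕ} (μ : Fin M → Fin D → ℝ) (α : ℝ)
    (S : Matrix (Fin D) (Fin D) ℝ) (m : Fin M) (x : Fin D → ℝ) : ℝ :=
  gaussDensity S (α • μ m) x / ∑ m', gaussDensity S (α • μ m') x


lemma hasDerivAt_update1 {D : ℕ} (x : Fin D → ℝ) (i j : Fin D) (c : ℝ) :
    HasDerivAt (fun t => Function.update x i t j - c) (if j = i then 1 else 0) (x i) := by
  rcases eq_or_ne j i with h | h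
  · subst h
    simp only [Function.update_self, if_pos rfl]
    exact (hasDerivAt_id _).sub_const c
  · simp only [Function.update_of_ne h, if_neg h]
    exact hasDerivAt_const _ _

lemma hasDerivAt_quad {D : ℕ} (A : Matrix (Fin D) (Fin D) ℝ) (hA : Aᵀ = A)
    (x c : Fin D → ℝ) (i : Fin D) :
    HasDerivAt (fun t => (Function.update x i t - c) ⬝ᵥ A.mulVec (Function.update x i t - c))
      (2 * A.mulVec (x - c) i) (x i) := by
  have key : HasDerivAt
      (fun t => ∑ j, (Function.update x i t j - c j) * ∑ k, A j k * (Function.update x i t k - c k))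
      (∑ j, ((if j = i then 1 else 0) * ∑ k, A j k * (Function.update x i (x i) k - c k) +
        (Function.update x i (x i) j - c j) * ∑ k, A j k * (if k = i then 1 else 0))) (x i) := by
    apply HasDerivAt.fun_sum
    intro j _
    exact (hasDerivAt_update1 x i j (c j)).mul
      (HasDerivAt.fun_sum (fun k _ => (hasDerivAt_update1 x i k (c k)).const_mul (A j k)))
  have hfun : (fun t => (Function.update x i t - c) ⬝ᵥ A.mulVec (Function.update x i t - c)) =
      (fun t => ∑ j, (Function.update x i t j - c j) * ∑ k, A j k * (Function.update x i t k - c k)) := by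
    funext t
    simp [dotProduct, mulVec, Pi.sub_apply]
  rw [hfun]
  convert key using 1
  simp only [Function.update_eq_self, ite_mul, one_mul, zero_mul, mul_ite, mul_one, mul_zero,
    Finset.sum_ite_eq', Finset.mem_univ, if_true]
  have h2 : ∑ j, (x j - c j) * A j i = A.mulVec (x - c) i := by
    conv_rhs => rw [← hA]
    simp [mulVec, dotProduct, mul_comm]
  rw [Finset.sum_add_distrib, h2]
  simp [mulVec, dotProduct, Pi.sub_apply]
  ring

lemma invSymm {D : ℕ} {S : Matrix (Fin D) (Fin D) ℝ} (hS : S.PosDef) : (S⁻¹)ᵀ = S⁻¹ := by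
  rw [Matrix.transpose_nonsing_inv, show Sᵀ = S from hS.isHermitian]

lemma gaussDensity_pos {D : ℕ} {S : Matrix (Fin D) (Fin D) ℝ} (hS : S.PosDef)
    (c x : Fin D → ℝ) : 0 < gaussDensity S c x := by
  unfold gaussDensity
  apply mul_pos _ (Real.exp_pos _)
  apply Real.rpow_pos_of_pos
  exact mul_pos (pow_pos (by positivity) D) hS.det_pos

lemma hasDerivAt_gauss {D : ℕ} {S : Matrix (Fin D) (Fin D) ℝ} (hS : S.PosDef)
    (c x : Fin D → ℝ) (i : Fin D) :
    HasDerivAt (fun t => gaussDensity S c (Function.update x i t))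
      (gaussDensity S c x * (-(S⁻¹.mulVec (x - c) i))) (x i) := by
  unfold gaussDensity
  have h := ((((hasDerivAt_quad S⁻¹ (invSymm hS) x c i).neg).div_const 2).exp).const_mul
    (((2 * Real.pi) ^ D * S.det) ^ (-(1/2) : ℝ))
  refine h.congr_deriv ?_
  simp only [Function.update_eq_self, Pi.neg_apply]
  ring

lemma score_eq {D M : ℕ} (hM : 1 ≤ M) (μ : Fin M → Fin D → ℝ) (α : ℝ)
    {S : Matrix (Fin D) (Fin D) ℝ} (hS : S.PosDef) (x : Fin D → ℝ) (i : Fin D) :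
    score μ α S x i =
      (∑ m, gaussDensity S (α • μ m) x * proxyScore α S x (μ m) i) /
        (∑ m, gaussDensity S (α • μ m) x) := by
  have hMne : (M : ℝ)⁻¹ ≠ 0 := by
    simp; omega
  have hT : 0 < ∑ m, gaussDensity S (α • μ m) x :=
    Finset.sum_pos (fun m _ => gaussDensity_pos hS _ _)
      (by simpa [Finset.univ_nonempty_iff] using Fin.pos_iff_nonempty.mp (by omega))
  have hp : 0 < marginal μ α S x := by
    unfold marginal
    positivity
  have hmarg : HasDerivAt (fun t => marginal μ α S (Function.update x i t))
      ((M : ℝ)⁻¹ * ∑ m, gaussDensity S (α • μ m) x * proxyScore α S x (μ m) i) (x i) := by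
    unfold marginal
    have := HasDerivAt.fun_sum (fun m (_ : m ∈ Finset.univ) => hasDerivAt_gauss hS (α • μ m) x i)
    have h2 := this.const_mul (M : ℝ)⁻¹
    refine h2.congr_deriv ?_
    congr 1
    apply Finset.sum_congr rfl
    intro m _
    unfold proxyScore
    rw [show α • μ m - x = -(x - α • μ m) by ring, Matrix.mulVec_neg]
    simp
  have hne : marginal μ α S (Function.update x i (x i)) ≠ 0 := by
    rw [Function.update_eq_self]; exact hp.ne'
  have hlog := hmarg.log hne
  rw [Function.update_eq_self] at hlog
  unfold score pderiv'
  rw [hlog.deriv]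
  unfold marginal
  rw [mul_div_mul_left _ _ hMne]

lemma sum_cross_zero {D M : ℕ} (hM : 1 ≤ M) (μ : Fin M → Fin D → ℝ) (α : ℝ)
    {S : Matrix (Fin D) (Fin D) ℝ} (hS : S.PosDef) (v x : Fin D → ℝ) :
    ∑ m, (v ⬝ᵥ (score μ α S x - proxyScore α S x (μ m))) * gaussDensity S (α • μ m) x = 0 := by
  have hT : 0 < ∑ m, gaussDensity S (α • μ m) x :=
    Finset.sum_pos (fun m _ => gaussDensity_pos hS _ _)
      (by simpa [Finset.univ_nonempty_iff] using Fin.pos_iff_nonempty.mp (by omega))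
  have key : ∀ i : Fin D,
      (∑ m, (score μ α S x i - proxyScore α S x (μ m) i) * gaussDensity S (α • μ m) x) = 0 := by
    intro i
    simp only [score_eq hM μ α hS x i, sub_mul]
    rw [Finset.sum_sub_distrib, ← Finset.mul_sum, div_mul_cancel₀ _ hT.ne', sub_eq_zero]
    exact Finset.sum_congr rfl (fun m _ => mul_comm _ _)
  simp only [dotProduct, Pi.sub_apply, Finset.sum_mul]
  rw [Finset.sum_comm]
  apply Finset.sum_eq_zero
  intro i _
  calc ∑ m, v i * (score μ α S x i - proxyScore α S x (μ m) i) * gaussDensity S (α • μ m) x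
      = v i * ∑ m, (score μ α S x i - proxyScore α S x (μ m) i) * gaussDensity S (α • μ m) x := by
        rw [Finset.mul_sum]; exact Finset.sum_congr rfl (fun m _ => by ring)
    _ = 0 := by rw [key i, mul_zero]

/-- the cross term between estimation error and proxy-score noise vanishes:
`(1/M) ∑ₘ ∫ (ŝ(x) − s(x)) ⬝ (s(x) − s̃(x; μₘ)) N(x; α μₘ, S) dx = 0`. -/
theorem cross_term_vanishes {D M : ℕ} (hD : 1 ≤ D) (hM : 1 ≤ M)
    (μ : Fin M → Fin D → ℝ) (α : ℝ) (hα : 0 < α)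
    (S : Matrix (Fin D) (Fin D) ℝ) (hS : S.PosDef)
    (shat : (Fin D → ℝ) → Fin D → ℝ) (hmeas : Measurable shat)
    (hint : ∀ m : Fin M,
      Integrable (fun x : Fin D → ℝ =>
        ((shat x - score μ α S x) ⬝ᵥ (score μ α S x - proxyScore α S x (μ m))) *
          gaussDensity S (α • μ m) x)) :
    (M : ℝ)⁻¹ *
        ∑ m, ∫ x : Fin D → ℝ,
          ((shat x - score μ α S x) ⬝ᵥ (score μ α S x - proxyScore α S x (μ m))) *
            gaussDensity S (α • μ m) x = 0 := by
  rw [← MeasureTheory.integral_finset_sum Finset.univ (fun m _ => hint m)]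
  have : ∀ x : Fin D → ℝ,
      (∑ m, ((shat x - score μ α S x) ⬝ᵥ (score μ α S x - proxyScore α S x (μ m))) *
        gaussDensity S (α • μ m) x) = 0 :=
    fun x => sum_cross_zero hM μ α hS (shat x - score μ α S x) x
  simp only [this, integral_zero, mul_zero]
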